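/- Let n ∈ ℕ, let γ_j, ζ_j ∈ ℂ be nonzero for j = 1,…,n, let β_j ∈ ℂ, and let g_j : ℂ → ℂ be twice differentiable. Set α_j = γ_j(γ_j + ζ_j)/ζ_j and λ_j = −γ_j(γ_j + ζ_j)²/ζ_j², and define ϑ : ℂ⁴ → ℂ (variables (x,r,t,z)) by ϑ = Σ_{j=1}^{n} g_j(α_j x + γ_j r + ζ_j t + λ_j z + β_j). Then ϑ satisfies the equal-symmetries system: ϑ_{rt} + ϑ_{rr} − ϑ_{xt} = 0, ϑ_{xx} + ϑ_{rz} = 0, and ϑ_{rx} + ϑ_{xt} + ϑ_{tz} = 0 at every point. -/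

import Mathlib

/-- Partial derivative with respect to the first argument. -/
noncomputable def pd1 (f : ℂ → ℂ → ℂ → ℂ → ℂ) (a b c d : ℂ) : ℂ :=
  deriv (fun s => f s b c d) a

/-- Partial derivative with respect to the second argument. -/
noncomputable def pd2 (f : ℂ → ℂ → ℂ → ℂ → ℂ) (a b c d : ℂ) : ℂ :=
  deriv (fun s => f a s c d) b

/-- Partial derivative with respect to the third argument. -/
noncomputable def pd3 (f : ℂ → ℂ → ℂ → ℂ → ℂ) (a b c d : ℂ) : ℂ :=
  deriv (fun s => f a b s d) c

/-- Partial derivative with respect to the fourth argument. -/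
noncomputable def pd4 (f : ℂ → ℂ → ℂ → ℂ → ℂ) (a b c d : ℂ) : ℂ :=
  deriv (fun s => f a b c s) d

/-! A constant-coefficient second-order operator `P(∂)` maps a plane wave
`g(α x + γ r + ζ t + λ z + β)` to `P(α, γ, ζ, λ) · g''(α x + γ r + ζ t + λ z + β)`. With the
prescribed `α` and `λ`, the wave vector `(α, γ, ζ, λ)` is a common zero of the symbols of the three
operators of the system, so every summand of `ϑ` solves it. -/

open Finset

theorem hasDerivAt_sum_comp_affine {𝕜 ι : Type*} [NontriviallyNormedField 𝕜] (S : Finset ι)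
    {h : ι → 𝕜 → 𝕜} (hh : ∀ j, Differentiable 𝕜 (h j)) (p c q : ι → 𝕜) (s : 𝕜) :
    HasDerivAt (fun s => ∑ j ∈ S, h j (p j + c j * s + q j))
      (∑ j ∈ S, c j * deriv (h j) (p j + c j * s + q j)) s :=
  HasDerivAt.fun_sum fun j _ => by
    simpa [mul_comm, Function.comp_def] using (hh j _).hasDerivAt.comp s
      ((((hasDerivAt_id s).const_mul (c j)).const_add (p j)).add_const (q j))

def planeWaveSum {n : ℕ} (a c e l b : Fin n → ℂ) (h : Fin n → ℂ → ℂ) : ℂ → ℂ → ℂ → ℂ → ℂ :=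
  fun x r t z => ∑ j, h j (a j * x + c j * r + e j * t + l j * z + b j)

section planeWaveSum

variable {n : ℕ} {a c e l b : Fin n → ℂ} {h : Fin n → ℂ → ℂ}

theorem pd1_planeWaveSum (hh : ∀ j, Differentiable ℂ (h j)) :
    pd1 (planeWaveSum a c e l b h) = planeWaveSum a c e l b fun j u => a j * deriv (h j) u := by
  funext x r t z
  have key :=
    (hasDerivAt_sum_comp_affine univ hh (fun _ => 0) a
      (fun j => c j * r + e j * t + l j * z + b j) x).deriv
  simp only [zero_add, ← add_assoc] at key
  exact key

theorem pd2_planeWaveSum (hh : ∀ j, Differentiable ℂ (h j)) :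
    pd2 (planeWaveSum a c e l b h) = planeWaveSum a c e l b fun j u => c j * deriv (h j) u := by
  funext x r t z
  have key :=
    (hasDerivAt_sum_comp_affine univ hh (fun j => a j * x) c
      (fun j => e j * t + l j * z + b j) r).deriv
  simp only [← add_assoc] at key
  exact key

theorem pd3_planeWaveSum (hh : ∀ j, Differentiable ℂ (h j)) :
    pd3 (planeWaveSum a c e l b h) = planeWaveSum a c e l b fun j u => e j * deriv (h j) u := by
  funext x r t z
  have key :=
    (hasDerivAt_sum_comp_affine univ hh (fun j => a j * x + c j * r) e
      (fun j => l j * z + b j) t).deriv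
  simp only [← add_assoc] at key
  exact key

theorem pd4_planeWaveSum (hh : ∀ j, Differentiable ℂ (h j)) :
    pd4 (planeWaveSum a c e l b h) = planeWaveSum a c e l b fun j u => l j * deriv (h j) u := by
  funext x r t z
  exact (hasDerivAt_sum_comp_affine univ hh (fun j => a j * x + c j * r + e j * t) l b z).deriv

end planeWaveSum

theorem equalSymmetries_symbols_vanish {K : Type*} [Field K] {α γ ζ l : K} (hζ : ζ ≠ 0)
    (hα : α = γ * (γ + ζ) / ζ) (hl : l = -(γ * (γ + ζ) ^ 2 / ζ ^ 2)) :
    γ * ζ + γ * γ - α * ζ = 0 ∧ α * α + γ * l = 0 ∧ γ * α + α * ζ + ζ * l = 0 := by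
  subst hα hl
  refine ⟨?_, ?_, ?_⟩ <;> field_simp <;> ring

theorem stmt10_general (n : ℕ) (γ ζ : Fin n → ℂ)
    (hζ : ∀ j, ζ j ≠ 0) (β : Fin n → ℂ)
    (g : Fin n → ℂ → ℂ) (hg : ∀ j, ContDiff ℂ 2 (g j))
    (α lam : Fin n → ℂ)
    (hα : ∀ j, α j = γ j * (γ j + ζ j) / ζ j)
    (hlam : ∀ j, lam j = -(γ j * (γ j + ζ j) ^ 2 / (ζ j) ^ 2))
    (ϑ : ℂ → ℂ → ℂ → ℂ → ℂ)
    (hϑ : ϑ = fun x r t z =>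
      ∑ j : Fin n, g j (α j * x + γ j * r + ζ j * t + lam j * z + β j)) :
    ∀ x r t z : ℂ,
      pd2 (pd3 ϑ) x r t z + pd2 (pd2 ϑ) x r t z - pd1 (pd3 ϑ) x r t z = 0
      ∧ pd1 (pd1 ϑ) x r t z + pd2 (pd4 ϑ) x r t z = 0
      ∧ pd2 (pd1 ϑ) x r t z + pd1 (pd3 ϑ) x r t z + pd3 (pd4 ϑ) x r t z = 0 := by
  obtain rfl : ϑ = planeWaveSum α γ ζ lam β g := hϑ
  have hg₁ : ∀ j, Differentiable ℂ (g j) := fun j => (hg j).differentiable two_ne_zero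
  have hg₂ : ∀ (k : Fin n → ℂ) j, Differentiable ℂ fun u => k j * deriv (g j) u :=
    fun k j => (hg j).differentiable_deriv_two.const_mul _
  simp only [pd1_planeWaveSum hg₁, pd2_planeWaveSum hg₁, pd3_planeWaveSum hg₁,
    pd4_planeWaveSum hg₁, pd1_planeWaveSum (hg₂ _), pd2_planeWaveSum (hg₂ _),
    pd3_planeWaveSum (hg₂ _), deriv_const_mul_field', planeWaveSum, ← sum_add_distrib,
    ← sum_sub_distrib]
  intro x r t z
  refine ⟨sum_eq_zero fun j _ => ?_, sum_eq_zero fun j _ => ?_, sum_eq_zero fun j _ => ?_⟩ <;>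
    obtain ⟨h₁, h₂, h₃⟩ := equalSymmetries_symbols_vanish (hζ j) (hα j) (hlam j)
  all_goals set w := deriv (deriv (g j)) (α j * x + γ j * r + ζ j * t + lam j * z + β j)
  · linear_combination w * h₁
  · linear_combination w * h₂
  · linear_combination w * h₃

/-- the functional-sum ansatz solves the equal-symmetries system
arising from the Legendre-transformed second heavenly equation. -/
theorem stmt10 (n : ℕ) (γ ζ : Fin n → ℂ)
    (hγ : ∀ j, γ j ≠ 0) (hζ : ∀ j, ζ j ≠ 0) (β : Fin n → ℂ)
    (g : Fin n → ℂ → ℂ) (hg : ∀ j, ContDiff ℂ 2 (g j))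
    (α lam : Fin n → ℂ)
    (hα : ∀ j, α j = γ j * (γ j + ζ j) / ζ j)
    (hlam : ∀ j, lam j = -(γ j * (γ j + ζ j) ^ 2 / (ζ j) ^ 2))
    (ϑ : ℂ → ℂ → ℂ → ℂ → ℂ)
    (hϑ : ϑ = fun x r t z =>
      ∑ j : Fin n, g j (α j * x + γ j * r + ζ j * t + lam j * z + β j)) :
    ∀ x r t z : ℂ,
      pd2 (pd3 ϑ) x r t z + pd2 (pd2 ϑ) x r t z - pd1 (pd3 ϑ) x r t z = 0
      ∧ pd1 (pd1 ϑ) x r t z + pd2 (pd4 ϑ) x r t z = 0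
      ∧ pd2 (pd1 ϑ) x r t z + pd1 (pd3 ϑ) x r t z + pd3 (pd4 ϑ) x r t z = 0 :=
  stmt10_general n γ ζ hζ β g hg α lam hα hlam ϑ hϑ
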